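/- Suppose that for each index i ∈ {1, …, r} there exists q_i ∈ Q with τ_i(q_i) > 0 and τ_j(q_i) = 0 for all j ≠ i (i.e., Q^sat is simplicial modulo its units). Then there exists a ∈ Q such that a + ℰ ⊆ Q, where ℰ is the essential set of Q. -/

import Mathlib

/-- The shift `α + S = {α + s : s ∈ S}` of a set `S ⊆ ℤ^d` by `α ∈ ℤ^d`. -/
def shiftSet {d : ℕ} (α : Fin d → ℤ) (S : Set (Fin d → ℤ)) : Set (Fin d → ℤ) :=
  (α + ·) '' S

/-- An essential point for `Q` is an `ε ∈ ℤ^d` such that whenever `a ∈ Q` satisfies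
`(a + ε + Q) ∩ Q = (ε + Q) ∩ Q`, `a` is a unit of `Q` (i.e. `-a ∈ Q`). -/
def essentialPoint {d : ℕ} (Q : AddSubmonoid (Fin d → ℤ)) (ε : Fin d → ℤ) : Prop :=
  ∀ a ∈ Q, shiftSet (a + ε) (Q : Set (Fin d → ℤ)) ∩ (Q : Set (Fin d → ℤ)) =
      shiftSet ε (Q : Set (Fin d → ℤ)) ∩ (Q : Set (Fin d → ℤ)) → -a ∈ Q

/-- The essential set `ℰ` of `Q`: the `Q`-set generated by the essential points. -/
def essentialSet {d : ℕ} (Q : AddSubmonoid (Fin d → ℤ)) : Set (Fin d → ℤ) :=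
  {x | ∃ ε q, essentialPoint Q ε ∧ q ∈ Q ∧ x = ε + q}

/-- The saturation `Q^sat = {x ∈ ℤ^d : n • x ∈ Q for some integer n ≥ 1}`. -/
def saturationOf {d : ℕ} (Q : AddSubmonoid (Fin d → ℤ)) : Set (Fin d → ℤ) :=
  {x | ∃ n : ℕ, 1 ≤ n ∧ n • x ∈ Q}

/-!
Each `τ_i` is bounded below on the essential set: if `τ_i(ε)` were very negative, every
`p ∈ Q` with `ε + p ∈ Q` would have `τ_i(p)` large, and elements of `Q` that are large in
direction `i` lie in `q_i + Q` (write them in the generators and use that some multiple of a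
generator `g` with `τ_i(g) > 0` lies in `q_i + Q`, as `Q^sat` is simplicial).  Then the
non-unit `q_i` would satisfy `(q_i + ε + Q) ∩ Q = (ε + Q) ∩ Q`.  Adding a large multiple of
`∑ q_i` therefore moves `ℰ` into `Q^sat`, and `Q^sat` is moved into `Q` by a single element
of `Q`, since it is covered by finitely many translates of `Q` and `Q^gp = ℤ^d`.
-/

open Finset

namespace AddSubmonoid

variable {M : Type*} [AddCommGroup M] {Q : AddSubmonoid M}

theorem exists_add_mem_of_mem_closure {x : M} (hx : x ∈ AddSubgroup.closure (Q : Set M)) :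
    ∃ a ∈ Q, a + x ∈ Q := by
  induction hx using AddSubgroup.closure_induction with
  | mem x hx => exact ⟨0, Q.zero_mem, by simpa using hx⟩
  | zero => exact ⟨0, Q.zero_mem, by simp⟩
  | add x y _ _ hx hy =>
    obtain ⟨a, ha, hax⟩ := hx
    obtain ⟨b, hb, hby⟩ := hy
    exact ⟨a + b, add_mem ha hb, by simpa [add_add_add_comm] using add_mem hax hby⟩
  | neg x _ hx =>
    obtain ⟨a, ha, hax⟩ := hx
    exact ⟨a + x, hax, by simpa using ha⟩

theorem exists_forall_add_mem_of_closure_eq_top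
    (hgp : AddSubgroup.closure (Q : Set M) = ⊤) (T : Finset M) :
    ∃ a ∈ Q, ∀ t ∈ T, a + t ∈ Q := by
  classical
  induction T using Finset.induction_on with
  | empty => exact ⟨0, Q.zero_mem, by simp⟩
  | insert t T _ ih =>
    obtain ⟨a, ha, haT⟩ := ih
    obtain ⟨b, hb, hbt⟩ := exists_add_mem_of_mem_closure (x := t) (hgp ▸ AddSubgroup.mem_top t)
    refine ⟨a + b, add_mem ha hb, ?_⟩
    simp only [mem_insert, forall_eq_or_imp]
    refine ⟨by simpa [add_assoc] using add_mem ha hbt, fun s hs => ?_⟩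
    simpa [add_right_comm] using add_mem (haT s hs) hb

theorem sum_nsmul_sub_nsmul_mem_closure {G : Finset M} (c : M → ℕ) {g : M} (hg : g ∈ G)
    {k : ℕ} (hk : k ≤ c g) : ∑ h ∈ G, c h • h - k • g ∈ closure (G : Set M) := by
  classical
  rw [← add_sum_erase G _ hg, ← Nat.sub_add_cancel hk, add_nsmul,
    show ∀ a b s : M, a + b + s - b = a + s from fun _ _ _ => by abel]
  exact add_mem (nsmul_mem (subset_closure hg) _)
    (sum_mem _ fun h hh => nsmul_mem (subset_closure (mem_of_mem_erase hh)) _)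

end AddSubmonoid

theorem exists_mem_forall_one_le_apply {M ι : Type*} [AddCommMonoid M] [Fintype ι]
    {Q : AddSubmonoid M} {τ : ι → M →+ ℤ} (hτQ : ∀ i, ∀ x ∈ Q, 0 ≤ τ i x)
    (hpos : ∀ i, ∃ q ∈ Q, 0 < τ i q) :
    ∃ σ ∈ Q, ∀ i, 1 ≤ τ i σ := by
  choose q hqQ hqpos using hpos
  refine ⟨∑ i, q i, sum_mem fun i _ => hqQ i, fun i => ?_⟩
  calc 1 ≤ τ i (q i) := hqpos i
    _ ≤ ∑ j, τ i (q j) := single_le_sum (fun j _ => hτQ i _ (hqQ j)) (mem_univ i)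
    _ = τ i (∑ j, q j) := (map_sum _ _ _).symm

section AffineSemigroup

variable {d : ℕ} {Q : AddSubmonoid (Fin d → ℤ)}

theorem exists_mem_abs_sub_apply_le_of_mem_saturationOf {G : Finset (Fin d → ℤ)}
    (hG : AddSubmonoid.closure (G : Set (Fin d → ℤ)) = Q) {x : Fin d → ℤ}
    (hx : x ∈ saturationOf Q) :
    ∃ u ∈ Q, ∀ j, |(x - u) j| ≤ ∑ g ∈ G, |g j| := by
  obtain ⟨n, hn, hnx⟩ := hx
  rw [← hG, AddSubmonoid.mem_closure_finset] at hnx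
  obtain ⟨c, -, hc⟩ := hnx
  refine ⟨∑ g ∈ G, (c g / n) • g,
    hG ▸ sum_mem fun g hg => nsmul_mem (AddSubmonoid.subset_closure hg) _, fun j => ?_⟩
  have hrem :
      (n : ℤ) * (x - ∑ g ∈ G, (c g / n) • g) j = ∑ g ∈ G, ((c g % n : ℕ) : ℤ) * g j := by
    have key : n • (x - ∑ g ∈ G, (c g / n) • g) = ∑ g ∈ G, (c g % n) • g := by
      rw [smul_sub, ← hc, smul_sum, ← sum_sub_distrib]
      refine sum_congr rfl fun g _ => ?_
      rw [smul_smul, sub_eq_iff_eq_add, ← add_nsmul, Nat.mod_add_div]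
    have hj := congrFun key j
    simp only [Pi.smul_apply, Finset.sum_apply] at hj
    simpa only [nsmul_eq_mul] using hj
  have hbound : |(n : ℤ) * (x - ∑ g ∈ G, (c g / n) • g) j| ≤ n * ∑ g ∈ G, |g j| := by
    rw [hrem, mul_sum]
    refine (abs_sum_le_sum_abs _ _).trans (sum_le_sum fun g _ => ?_)
    rw [abs_mul, Nat.abs_cast]
    exact mul_le_mul_of_nonneg_right (by exact_mod_cast (Nat.mod_lt _ hn).le) (abs_nonneg _)
  have hn' : (0 : ℤ) < n := by exact_mod_cast hn
  rw [abs_mul, Nat.abs_cast] at hbound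
  exact le_of_mul_le_mul_left hbound hn'

theorem exists_add_mem_of_mem_saturationOf (hFG : Q.FG)
    (hgp : AddSubgroup.closure (Q : Set (Fin d → ℤ)) = ⊤) :
    ∃ a ∈ Q, ∀ x ∈ saturationOf Q, a + x ∈ Q := by
  obtain ⟨G, hG⟩ := hFG
  let b : Fin d → ℤ := fun j => ∑ g ∈ G, |g j|
  obtain ⟨a, ha, haT⟩ :=
    Q.exists_forall_add_mem_of_closure_eq_top hgp (Fintype.piFinset fun j => Icc (-b j) (b j))
  refine ⟨a, ha, fun x hx => ?_⟩
  obtain ⟨u, hu, hxu⟩ := exists_mem_abs_sub_apply_le_of_mem_saturationOf hG hx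
  have hau : a + (x - u) ∈ Q :=
    haT _ (Fintype.mem_piFinset.2 fun j => mem_Icc.2 (abs_le.1 (hxu j)))
  simpa only [add_assoc, sub_add_cancel] using add_mem hau hu

theorem essentialPoint.neg_le_apply {ε q : Fin d → ℤ} (hε : essentialPoint Q ε)
    {f : (Fin d → ℤ) →+ ℤ} (hf : ∀ x ∈ Q, 0 ≤ f x) (hq : q ∈ Q) (hfq : 0 < f q) {C : ℤ}
    (hC : ∀ p ∈ Q, C < f p → p - q ∈ Q) : -C ≤ f ε := by
  by_contra! hlt
  have hnq : -q ∉ Q := fun h => by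
    have := hf _ h
    rw [map_neg] at this
    omega
  refine hnq (hε q hq ?_)
  ext x
  simp only [shiftSet, Set.mem_inter_iff, Set.mem_image, SetLike.mem_coe]
  constructor
  · rintro ⟨⟨s, hs, rfl⟩, hx⟩
    exact ⟨⟨q + s, add_mem hq hs, by abel⟩, hx⟩
  · rintro ⟨⟨p, hp, rfl⟩, hx⟩
    have hfp : C < f p := by
      have := hf _ hx
      rw [map_add] at this
      omega
    exact ⟨⟨p - q, hC p hp hfp, by abel⟩, hx⟩

variable {ι : Type*} {τ : ι → (Fin d → ℤ) →+ ℤ}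

theorem exists_nsmul_sub_mem (hτQ : ∀ i, ∀ x ∈ Q, 0 ≤ τ i x)
    (hsat : {x | ∀ i, 0 ≤ τ i x} ⊆ saturationOf Q) {i : ι} {q g : Fin d → ℤ} (hq : q ∈ Q)
    (hqi : ∀ j, j ≠ i → τ j q = 0) (hg : g ∈ Q) (hgi : 0 < τ i g) :
    ∃ N : ℕ, N • g - q ∈ Q := by
  set m := (τ i q).toNat
  obtain ⟨n, hn, hnQ⟩ : m • g - q ∈ saturationOf Q := hsat fun j => by
    rw [map_sub, map_nsmul, nsmul_eq_mul]
    obtain rfl | hji := eq_or_ne j i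
    · have : τ j q ≤ m := Int.self_le_toNat _
      nlinarith
    · rw [hqi j hji, sub_zero]
      exact mul_nonneg (by positivity) (hτQ j g hg)
  obtain ⟨k, rfl⟩ : ∃ k, n = k + 1 := ⟨n - 1, by omega⟩
  refine ⟨(k + 1) * m, ?_⟩
  have hsplit : ((k + 1) * m) • g - q = (k + 1) • (m • g - q) + k • q := by
    rw [smul_sub, smul_smul, succ_nsmul q k]
    abel
  rw [hsplit]
  exact add_mem hnQ (nsmul_mem hq k)

theorem exists_forall_sub_mem_of_lt (hFG : Q.FG) (hτQ : ∀ i, ∀ x ∈ Q, 0 ≤ τ i x)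
    (hsat : {x | ∀ i, 0 ≤ τ i x} ⊆ saturationOf Q) {i : ι} {q : Fin d → ℤ} (hq : q ∈ Q)
    (hqi : ∀ j, j ≠ i → τ j q = 0) :
    ∃ C : ℤ, ∀ p ∈ Q, C < τ i p → p - q ∈ Q := by
  obtain ⟨G, rfl⟩ := hFG
  have hN : ∀ g ∈ G, 0 < τ i g → ∃ N : ℕ, N • g - q ∈ AddSubmonoid.closure (G : Set _) :=
    fun g hg hgi => exists_nsmul_sub_mem hτQ hsat hq hqi (AddSubmonoid.subset_closure hg) hgi
  choose! N hN using hN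
  refine ⟨∑ g ∈ G, N g * τ i g, fun p hp hlt => ?_⟩
  obtain ⟨c, -, rfl⟩ := AddSubmonoid.mem_closure_finset.mp hp
  simp only [map_sum, map_nsmul] at hlt
  simp only [nsmul_eq_mul] at hlt
  -- some generator `g` occurs in `p` with a coefficient beyond `N g`
  obtain ⟨g, hg, hlt⟩ := exists_lt_of_sum_lt hlt
  have hτg := hτQ i g (AddSubmonoid.subset_closure hg)
  have hNc : N g ≤ c g := by exact_mod_cast (lt_of_mul_lt_mul_right hlt hτg).le
  have hgi : 0 < τ i g := lt_of_le_of_ne hτg (by rintro h; simp [← h] at hlt)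
  rw [show ∑ h ∈ G, c h • h - q = (N g • g - q) + (∑ h ∈ G, c h • h - N g • g) by abel]
  exact add_mem (hN g hg hgi) (AddSubmonoid.sum_nsmul_sub_nsmul_mem_closure c hg hNc)

theorem exists_forall_neg_le_apply_of_mem_essentialSet [Fintype ι] (hFG : Q.FG)
    (hτQ : ∀ i, ∀ x ∈ Q, 0 ≤ τ i x) (hsat : {x | ∀ i, 0 ≤ τ i x} ⊆ saturationOf Q)
    (hsimp : ∀ i, ∃ q ∈ Q, 0 < τ i q ∧ ∀ j, j ≠ i → τ j q = 0) :
    ∃ C : ℕ, ∀ x ∈ essentialSet Q, ∀ i, -(C : ℤ) ≤ τ i x := by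
  have hbound : ∀ i, ∃ C : ℤ, ∀ ε, essentialPoint Q ε → -C ≤ τ i ε := fun i => by
    obtain ⟨q, hq, hqpos, hqi⟩ := hsimp i
    obtain ⟨C, hC⟩ := exists_forall_sub_mem_of_lt hFG hτQ hsat hq hqi
    exact ⟨C, fun ε hε => hε.neg_le_apply (hτQ i) hq hqpos hC⟩
  choose C hC using hbound
  refine ⟨∑ i, (C i).natAbs, ?_⟩
  rintro _ ⟨ε, q, hε, hq, rfl⟩ i
  have hCi : C i ≤ ((∑ j, (C j).natAbs : ℕ) : ℤ) := by
    rw [Nat.cast_sum]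
    exact Int.le_natAbs.trans
      (single_le_sum (f := fun j => ((C j).natAbs : ℤ)) (fun j _ => by positivity) (mem_univ i))
  have hεi := hC i ε hε
  have hqi := hτQ i q hq
  rw [map_add]
  linarith

end AffineSemigroup

/-- Suppose that for each `i` there exists `q_i ∈ Q` with `τ_i(q_i) > 0` and
`τ_j(q_i) = 0` for all `j ≠ i` (i.e. `Q^sat` is simplicial modulo its units).  Then
there exists `a ∈ Q` such that `a + ℰ ⊆ Q`, where `ℰ` is the essential set of `Q`. -/
theorem stmt14 {d r : ℕ} (Q : AddSubmonoid (Fin d → ℤ)) (hFG : Q.FG)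
    (hgp : AddSubgroup.closure (Q : Set (Fin d → ℤ)) = ⊤)
    (τ : Fin r → ((Fin d → ℤ) →+ ℤ))
    (hτQ : ∀ i, ∀ x ∈ Q, 0 ≤ τ i x)
    (hsat : saturationOf Q = {x : Fin d → ℤ | ∀ i, 0 ≤ τ i x})
    (hsimp : ∀ i : Fin r, ∃ q ∈ Q, 0 < τ i q ∧ ∀ j, j ≠ i → τ j q = 0) :
    ∃ a ∈ Q, ∀ x ∈ essentialSet Q, a + x ∈ Q := by
  obtain ⟨a, ha, haQ⟩ := exists_add_mem_of_mem_saturationOf hFG hgp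
  obtain ⟨C, hC⟩ := exists_forall_neg_le_apply_of_mem_essentialSet hFG hτQ hsat.ge hsimp
  obtain ⟨σ, hσ, hσpos⟩ :=
    exists_mem_forall_one_le_apply hτQ fun i => (hsimp i).imp fun _ hq => ⟨hq.1, hq.2.1⟩
  refine ⟨a + C • σ, add_mem ha (nsmul_mem hσ C), fun x hx => ?_⟩
  have hx' : C • σ + x ∈ saturationOf Q := hsat.ge fun i => by
    rw [map_add, map_nsmul, nsmul_eq_mul]
    nlinarith [hC x hx i, hσpos i]
  simpa only [add_assoc] using haQ _ hx'
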